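/- arXiv:2101.11965 — 15 statements merged into one kernel-verified Lean document; each statement's English description precedes it below -/
import Mathlib

section
/- Every conservative choice function f on a poset P satisfies path independence: for all ideals X and Y, f(X ∪ Y) = f(f(X) ∪ f(Y)). -/
/-- A choice function on the ideals of a poset: `f X` is an ideal contained in `X`. -/
def IsCF {P : Type*} [PartialOrder P] (f : Set P → Set P) : Prop :=
  ∀ X : Set P, IsLowerSet X → f X ⊆ X ∧ IsLowerSet (f X)

/-- Heredity: if `A ⊆ B` then `f B ∩ A ⊆ f A` (for ideals `A`, `B`). -/
def Heredity {P : Type*} [PartialOrder P] (f : Set P → Set P) : Prop :=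
  ∀ A B : Set P, IsLowerSet A → IsLowerSet B → A ⊆ B → f B ∩ A ⊆ f A

/-- Outcast: if `f B ⊆ A ⊆ B` then `f A = f B` (for ideals `A`, `B`). -/
def Outcast {P : Type*} [PartialOrder P] (f : Set P → Set P) : Prop :=
  ∀ A B : Set P, IsLowerSet A → IsLowerSet B → f B ⊆ A → A ⊆ B → f A = f B

theorem Heredity.apply_union_subset {P : Type*} [PartialOrder P] {f : Set P → Set P}
    (hcf : IsCF f) (hh : Heredity f) {X Y : Set P} (hX : IsLowerSet X) (hY : IsLowerSet Y) :
    f (X ∪ Y) ⊆ f X ∪ f Y := by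
  have hXY := hX.union hY
  intro x hx
  rcases (hcf (X ∪ Y) hXY).1 hx with hxX | hxY
  · exact Or.inl (hh X (X ∪ Y) hX hXY Set.subset_union_left ⟨hx, hxX⟩)
  · exact Or.inr (hh Y (X ∪ Y) hY hXY Set.subset_union_right ⟨hx, hxY⟩)

/-- Every conservative choice function satisfies path independence. -/
theorem conservative_pathIndependent {P : Type*} [PartialOrder P] (f : Set P → Set P)
    (hcf : IsCF f) (hh : Heredity f) (ho : Outcast f) :
    ∀ X Y : Set P, IsLowerSet X → IsLowerSet Y → f (X ∪ Y) = f (f X ∪ f Y) := by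
  intro X Y hX hY
  obtain ⟨hfX_sub, hfX_lower⟩ := hcf X hX
  obtain ⟨hfY_sub, hfY_lower⟩ := hcf Y hY
  exact (ho (f X ∪ f Y) (X ∪ Y) (hfX_lower.union hfY_lower) (hX.union hY)
    (hh.apply_union_subset hcf hX hY) (Set.union_subset_union hfX_sub hfY_sub)).symm
end

section
/- Every conservative choice function f on a poset P satisfies infinite path independence: for any family (X_i)_{i∈I} of ideals, f(⋃_i X_i) = f(⋃_i f(X_i)). -/
/-! By heredity each point chosen from `⋃ i, X i` is chosen from the `X i` containing it, so
`f (⋃ i, X i) ⊆ ⋃ i, f (X i) ⊆ ⋃ i, X i`; outcast then says that `f` takes the same value on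
both ends of this sandwich. -/

namespace IsCF

variable {P : Type*} [PartialOrder P] {f : Set P → Set P} {ι : Type*} {X : ι → Set P}

theorem isLowerSet_iUnion_apply (hcf : IsCF f) (hX : ∀ i, IsLowerSet (X i)) :
    IsLowerSet (⋃ i, f (X i)) :=
  isLowerSet_iUnion fun i => (hcf _ (hX i)).2

theorem iUnion_apply_subset (hcf : IsCF f) (hX : ∀ i, IsLowerSet (X i)) :
    ⋃ i, f (X i) ⊆ ⋃ i, X i :=
  Set.iUnion_mono fun i => (hcf _ (hX i)).1

theorem apply_iUnion_subset (hcf : IsCF f) (hh : Heredity f) (hX : ∀ i, IsLowerSet (X i)) :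
    f (⋃ i, X i) ⊆ ⋃ i, f (X i) := by
  have hU : IsLowerSet (⋃ i, X i) := isLowerSet_iUnion hX
  intro x hx
  obtain ⟨i, hxi⟩ := Set.mem_iUnion.mp ((hcf _ hU).1 hx)
  exact Set.mem_iUnion.mpr ⟨i, hh _ _ (hX i) hU (Set.subset_iUnion X i) ⟨hx, hxi⟩⟩

end IsCF

/-- Every conservative choice function satisfies infinite path independence. -/
theorem conservative_infinite_pathIndependent {P : Type*} [PartialOrder P]
    (f : Set P → Set P) (hcf : IsCF f) (hh : Heredity f) (ho : Outcast f)
    {ι : Type*} (Xs : ι → Set P) (hXs : ∀ i, IsLowerSet (Xs i)) :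
    f (⋃ i, Xs i) = f (⋃ i, f (Xs i)) :=
  (ho _ _ (hcf.isLowerSet_iUnion_apply hXs) (isLowerSet_iUnion hXs)
    (hcf.apply_iUnion_subset hh hXs) (hcf.iUnion_apply_subset hXs)).symm
end

section
/- The pointwise union of an arbitrary family of conservative choice functions on a poset P is a conservative choice function. That is, if each f_i is conservative, then f defined by f(X) = ⋃_i f_i(X) is conservative. -/
section PointwiseUnion

variable {P : Type*} [PartialOrder P] {ι : Type*} {F : ι → (Set P → Set P)}

theorem IsCF.iUnion (hcf : ∀ i, IsCF (F i)) : IsCF (fun X => ⋃ i, F i X) := fun X hX =>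
  ⟨Set.iUnion_subset fun i => (hcf i X hX).1, isLowerSet_iUnion fun i => (hcf i X hX).2⟩

theorem Heredity.iUnion (hh : ∀ i, Heredity (F i)) : Heredity (fun X => ⋃ i, F i X) := by
  intro A B hA hB hAB
  rw [Set.iUnion_inter]
  exact Set.iUnion_mono fun i => hh i A B hA hB hAB

theorem Outcast.iUnion (ho : ∀ i, Outcast (F i)) : Outcast (fun X => ⋃ i, F i X) := by
  intro A B hA hB hBA hAB
  have hcomponent : ∀ i, F i A = F i B := fun i =>
    ho i A B hA hB ((Set.subset_iUnion (fun j => F j B) i).trans hBA) hAB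
  simp only [hcomponent]

end PointwiseUnion

/-- The pointwise union of an arbitrary family of conservative choice functions
is a conservative choice function. -/
theorem union_conservative {P : Type*} [PartialOrder P] {ι : Type*}
    (F : ι → (Set P → Set P))
    (hcf : ∀ i, IsCF (F i)) (hh : ∀ i, Heredity (F i)) (ho : ∀ i, Outcast (F i)) :
    IsCF (fun X => ⋃ i, F i X) ∧ Heredity (fun X => ⋃ i, F i X) ∧
      Outcast (fun X => ⋃ i, F i X) :=
  ⟨IsCF.iUnion hcf, Heredity.iUnion hh, Outcast.iUnion ho⟩
end

section
/- A choice function f on a poset is conservative (satisfies heredity and outcast) if and only if it satisfies the single condition: for all ideals A, B, if f(A) ⊆ B then f(B) ∩ A ⊆ f(A). -/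
section

variable {P : Type*} [PartialOrder P] {f : Set P → Set P}

theorem Heredity.single_of_outcast (hsub : ∀ X, IsLowerSet X → f X ⊆ X)
    (hher : Heredity f) (hout : Outcast f) {A B : Set P} (hA : IsLowerSet A)
    (hB : IsLowerSet B) (hAB : f A ⊆ B) : f B ∩ A ⊆ f A := by
  have hfA : f (A ∩ B) = f A :=
    hout _ _ (hA.inter hB) hA (Set.subset_inter (hsub A hA) hAB) Set.inter_subset_left
  rintro x ⟨hxB, hxA⟩
  rw [← hfA]
  exact hher _ _ (hA.inter hB) hB Set.inter_subset_right ⟨hxB, hxA, hsub B hB hxB⟩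

theorem Heredity.of_single (hsub : ∀ X, IsLowerSet X → f X ⊆ X)
    (hf : ∀ A B : Set P, IsLowerSet A → IsLowerSet B → f A ⊆ B → f B ∩ A ⊆ f A) :
    Heredity f :=
  fun A B hA hB hAB => hf A B hA hB ((hsub A hA).trans hAB)

theorem Outcast.of_single (hsub : ∀ X, IsLowerSet X → f X ⊆ X)
    (hf : ∀ A B : Set P, IsLowerSet A → IsLowerSet B → f A ⊆ B → f B ∩ A ⊆ f A) :
    Outcast f := by
  intro A B hA hB hfBA hAB
  apply Set.Subset.antisymm
  · exact fun x hx => hf B A hB hA hfBA ⟨hx, hAB (hsub A hA hx)⟩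
  · exact fun x hx => hf A B hA hB ((hsub A hA).trans hAB) ⟨hx, hfBA hx⟩

end

/-- A choice function is conservative iff it satisfies the single condition:
if `f A ⊆ B` then `f B ∩ A ⊆ f A`. -/
theorem conservative_iff_single {P : Type*} [PartialOrder P] (f : Set P → Set P)
    (hcf : IsCF f) :
    (Heredity f ∧ Outcast f) ↔
      (∀ A B : Set P, IsLowerSet A → IsLowerSet B → f A ⊆ B → f B ∩ A ⊆ f A) := by
  have hsub : ∀ X, IsLowerSet X → f X ⊆ X := fun X hX => (hcf X hX).1
  exact ⟨fun ⟨hher, hout⟩ _ _ hA hB hAB => hher.single_of_outcast hsub hout hA hB hAB,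
    fun hf => ⟨Heredity.of_single hsub hf, Outcast.of_single hsub hf⟩⟩
end

section
/- If P is a linearly ordered set (chain), then every conservative choice function f on P is of the form f(X) = I ∩ X for the ideal I = f(P). In particular every conservative CF on a chain is a constant choice function. -/
/-!
Since the ideals of a chain are totally ordered by inclusion, every ideal `X` either contains
`f P` or is contained in it. In the first case outcast gives `f X = f P`; in the second,
heredity gives `X = f P ∩ X ⊆ f X ⊆ X`.
-/

section ChoiceFunction

variable {P : Type*} [PartialOrder P] {f : Set P → Set P} {X : Set P}

theorem Outcast.apply_eq_inter_of_apply_univ_subset (ho : Outcast f) (hX : IsLowerSet X)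
    (h : f Set.univ ⊆ X) : f X = f Set.univ ∩ X := by
  rw [Set.inter_eq_left.mpr h]
  exact ho X Set.univ hX isLowerSet_univ h (Set.subset_univ X)

theorem IsCF.apply_eq_inter_of_subset_apply_univ (hcf : IsCF f) (hh : Heredity f)
    (hX : IsLowerSet X) (h : X ⊆ f Set.univ) : f X = f Set.univ ∩ X := by
  have hfX : f X ⊆ X := (hcf X hX).1
  exact (Set.subset_inter (hfX.trans h) hfX).antisymm
    (hh X Set.univ hX isLowerSet_univ (Set.subset_univ X))

end ChoiceFunction

/-- On a chain, every conservative choice function is constant: `f X = f P ∩ X`. -/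
theorem chain_conservative_constant {P : Type*} [LinearOrder P] (f : Set P → Set P)
    (hcf : IsCF f) (hh : Heredity f) (ho : Outcast f) :
    ∀ X : Set P, IsLowerSet X → f X = f Set.univ ∩ X := by
  intro X hX
  rcases (hcf Set.univ isLowerSet_univ).2.total hX with h | h
  · exact ho.apply_eq_inter_of_apply_univ_subset hX h
  · exact hcf.apply_eq_inter_of_subset_apply_univ hh hX h
end

section
/- For any finite sequence A = (a_1, ..., a_k) of elements of a poset P, the elementary choice function f_A is conservative (satisfies heredity and outcast). -/
/-- The elementary choice function associated with a finite sequence (list) `A`: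
`elemCF A X = X ∩ I(a_1,…,a_i)` where `i` is the least index with `a_i ∈ X`
(`i = k` if no member of `A` lies in `X`). -/
def elemCF {P : Type*} [PartialOrder P] : List P → Set P → Set P
  | [], _ => ∅
  | a :: as, X => (X ∩ {y | y ≤ a}) ∪ {y | a ∉ X ∧ y ∈ elemCF as X}

/-- The sequence `A` is compatible with `f`: `a_i ∈ f (P − F(a_1,…,a_{i-1}))` for each `i`,
where `F(S)` is the filter generated by `S`. -/
def Compatible {P : Type*} [PartialOrder P] (f : Set P → Set P) (A : List P) : Prop :=
  ∀ i : Fin A.length, A.get i ∈ f {x | ∀ j : Fin A.length, j.1 < i.1 → ¬ A.get j ≤ x}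

/-- An antichain sequence: pairwise incomparable terms. -/
def IsAntichainSeq {P : Type*} [PartialOrder P] (A : List P) : Prop :=
  A.Pairwise fun a b => ¬ a ≤ b ∧ ¬ b ≤ a

theorem elemCF_inter_subset_of_subset {P : Type*} [PartialOrder P] (L : List P) {A B : Set P}
    (hAB : A ⊆ B) : elemCF L B ∩ A ⊆ elemCF L A := by
  induction L with
  | nil => simp [elemCF]
  | cons a as ih =>
    rintro x ⟨(⟨-, hxa⟩ | ⟨haB, hx⟩), hxA⟩
    · exact Or.inl ⟨hxA, hxa⟩
    · exact Or.inr ⟨fun haA => haB (hAB haA), ih ⟨hx, hxA⟩⟩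

/- Inductively on the sequence: `elemCF L B ⊆ A ⊆ B` forces `A` and `B` to agree below the head `a`
and on whether they contain `a`, and when they miss `a` the tail inherits the hypothesis. -/
theorem elemCF_eq_of_subset_of_subset {P : Type*} [PartialOrder P] (L : List P) {A B : Set P}
    (hBA : elemCF L B ⊆ A) (hAB : A ⊆ B) : elemCF L A = elemCF L B := by
  induction L with
  | nil => rfl
  | cons a as ih =>
    have hhead : B ∩ {y | y ≤ a} ⊆ A := fun x hx => hBA (Or.inl hx)
    have hinter : A ∩ {y | y ≤ a} = B ∩ {y | y ≤ a} :=
      subset_antisymm (Set.inter_subset_inter_left _ hAB) fun x hx => ⟨hhead hx, hx.2⟩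
    have hmem : a ∈ A ↔ a ∈ B := ⟨fun h => hAB h, fun h => hhead ⟨h, le_rfl⟩⟩
    have htail : {y | a ∉ A ∧ y ∈ elemCF as A} = {y | a ∉ B ∧ y ∈ elemCF as B} := by
      ext y
      show (a ∉ A ∧ _) ↔ (a ∉ B ∧ _)
      rw [hmem]
      refine and_congr_right fun haB => ?_
      rw [ih fun x hx => hBA (Or.inr ⟨haB, hx⟩)]
    simp only [elemCF, hinter, htail]

/-- The elementary choice function of any finite sequence is conservative. -/
theorem elemCF_conservative {P : Type*} [PartialOrder P] (A : List P) :
    Heredity (elemCF A) ∧ Outcast (elemCF A) :=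
  ⟨fun _ _ _ _ hAB => elemCF_inter_subset_of_subset A hAB,
    fun _ _ _ _ hBA hAB => elemCF_eq_of_subset_of_subset A hBA hAB⟩
end

section
/- If a finite sequence A = (a_1,...,a_k) in a poset P is compatible with a hereditary choice function f (meaning a_i ∈ f(P − F(a_1,...,a_{i−1})) for each i), then f_A(X) ⊆ f(X) for every ideal X. -/
/-!
If `y ∈ f_A X`, let `a_i` be the first term of `A` in `X`. Then `y ≤ a_i`, and the ideal `X`
misses `a_1, …, a_{i-1}`, so it lies in `B = P − F(a_1, …, a_{i-1})`. Compatibility puts `a_i`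
in the ideal `f B`, hence `y ∈ f B ∩ X ⊆ f X` by heredity.
-/

lemma exists_of_mem_elemCF {P : Type*} [PartialOrder P] {A : List P} {X : Set P} {y : P}
    (hy : y ∈ elemCF A X) :
    ∃ j : Fin A.length, y ∈ X ∧ y ≤ A.get j ∧
      ∀ j' : Fin A.length, j'.1 < j.1 → A.get j' ∉ X := by
  induction A with
  | nil => exact absurd hy (Set.notMem_empty y)
  | cons a as ih =>
    rcases hy with ⟨hyX, hya⟩ | ⟨haX, hy⟩
    · exact ⟨⟨0, Nat.succ_pos _⟩, hyX, hya, fun j' hj' => absurd hj' (Nat.not_lt_zero _)⟩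
    · obtain ⟨j, hyX, hyj, hmin⟩ := ih hy
      refine ⟨j.succ, hyX, hyj, fun j' hj' => ?_⟩
      cases j' using Fin.cases with
      | zero => exact haX
      | succ j' => exact hmin j' (Nat.lt_of_succ_lt_succ hj')

section Avoiding

variable {P ι : Type*} [PartialOrder P] (a : ι → P) (p : ι → Prop)

lemma isLowerSet_setOf_forall_not_le : IsLowerSet {x | ∀ i, p i → ¬ a i ≤ x} :=
  fun _ _ hvu hu i hi hle => hu i hi (hle.trans hvu)

variable {a p} in
lemma IsLowerSet.subset_setOf_forall_not_le {X : Set P} (hX : IsLowerSet X)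
    (h : ∀ i, p i → a i ∉ X) : X ⊆ {x | ∀ i, p i → ¬ a i ≤ x} :=
  fun _ hx i hi hle => h i hi (hX hle hx)

end Avoiding

lemma Heredity.mem_of_le_of_mem {P : Type*} [PartialOrder P] {f : Set P → Set P}
    (hh : Heredity f) (hcf : IsCF f) {X B : Set P} (hX : IsLowerSet X) (hB : IsLowerSet B)
    (hXB : X ⊆ B) {a y : P} (ha : a ∈ f B) (hy : y ∈ X) (hya : y ≤ a) : y ∈ f X :=
  hh X B hX hB hXB ⟨(hcf B hB).2 hya ha, hy⟩

/-- If a finite sequence `A` is compatible with a hereditary choice function `f`,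
then `f_A ⊆ f`. -/
theorem compatible_elemCF_subset {P : Type*} [PartialOrder P] (f : Set P → Set P)
    (hcf : IsCF f) (hh : Heredity f) (A : List P) (hA : Compatible f A) :
    ∀ X : Set P, IsLowerSet X → elemCF A X ⊆ f X := by
  intro X hX y hy
  obtain ⟨j, hyX, hyj, hmin⟩ := exists_of_mem_elemCF hy
  exact hh.mem_of_le_of_mem hcf hX (isLowerSet_setOf_forall_not_le _ _)
    (hX.subset_setOf_forall_not_le hmin) (hA j) hyX hyj
end

section
/- Let f be a choice function on a finite poset P satisfying the outcast condition, and suppose x ∈ f(X) for some ideal X. Then there exists a finite sequence A = (a_1,...,a_k) of pairwise incomparable elements of P, compatible with f, such that x ∈ f_A(X). -/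
section

variable {P : Type*} [PartialOrder P]

/-- Each term is chosen by `f` from what remains of `Y` after removing the filter generated by the
earlier terms; `Compatible f A` is the case `Y = univ`. -/
def CompatibleWithin (f : Set P → Set P) : Set P → List P → Prop
  | _, [] => True
  | Y, a :: A => a ∈ f Y ∧ CompatibleWithin f (Y \ Set.Ici a) A

variable {f : Set P → Set P}

theorem CompatibleWithin.get_mem :
    ∀ {Y : Set P} {A : List P}, CompatibleWithin f Y A → ∀ i : Fin A.length,
      A.get i ∈ f {y | y ∈ Y ∧ ∀ j : Fin A.length, j < i → ¬ A.get j ≤ y}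
  | _, [], _, i => i.elim0
  | Y, a :: A, ⟨ha, hA⟩, i => by
    induction i using Fin.cases with
    | zero => simpa using ha
    | succ i =>
      have hset : {y | y ∈ Y ∧ ∀ j : Fin (a :: A).length, j < i.succ → ¬ (a :: A).get j ≤ y} =
          {y | y ∈ Y \ Set.Ici a ∧ ∀ j : Fin A.length, j < i → ¬ A.get j ≤ y} := by
        ext y
        simp [Fin.forall_fin_succ, and_assoc]
      rw [hset]
      exact hA.get_mem i

theorem Compatible.of_compatibleWithin_univ {A : List P} (h : CompatibleWithin f Set.univ A) :
    Compatible f A := fun i => by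
  simpa using h.get_mem i

theorem Outcast.nonempty_diff_of_notMem (ho : Outcast f) {X Y : Set P} (hX : IsLowerSet X)
    (hY : IsLowerSet Y) (hXY : X ⊆ Y) {x : P} (hx : x ∈ f X) (hxY : x ∉ f Y) :
    (f Y \ X).Nonempty := by
  by_contra h
  rw [Set.not_nonempty_iff_eq_empty, Set.sdiff_eq_empty] at h
  exact hxY (ho X Y hX hY h hXY ▸ hx)

theorem exists_antichainSeq_compatibleWithin [Finite P] (hcf : IsCF f) (ho : Outcast f)
    {X : Set P} (hX : IsLowerSet X) {x : P} (hx : x ∈ f X) (Y : Set P) (hY : IsLowerSet Y)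
    (hXY : X ⊆ Y) : ∃ A : List P, IsAntichainSeq A ∧ CompatibleWithin f Y A ∧
      x ∈ elemCF A X ∧ ∀ b ∈ A, b = x ∨ b ∈ Y \ X := by
  induction Y using WellFoundedLT.induction with | ind Y ih => ?_
  have hxX : x ∈ X := (hcf X hX).1 hx
  by_cases hxY : x ∈ f Y
  · exact ⟨[x], by simp [IsAntichainSeq], ⟨hxY, trivial⟩, Or.inl ⟨hxX, le_rfl⟩, by simp⟩
  obtain ⟨a, ha⟩ := (Set.toFinite _).exists_minimal (ho.nonempty_diff_of_notMem hX hY hXY hx hxY)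
  obtain ⟨haf, haX⟩ := ha.prop
  have haY : a ∈ Y := (hcf Y hY).1 haf
  have hXY' : X ⊆ Y \ Set.Ici a := fun y hy => ⟨hXY hy, fun hay => haX (hX hay hy)⟩
  obtain ⟨A, hanti, hcomp, hxA, hA⟩ := ih (Y \ Set.Ici a)
    ⟨Set.sdiff_subset, fun h => (h haY).2 le_rfl⟩ (hY.inter (isUpperSet_Ici a).compl) hXY'
  have hinc : ∀ b ∈ A, ¬ a ≤ b ∧ ¬ b ≤ a := by
    intro b hb
    have hbY' : b ∈ Y \ Set.Ici a := by
      rcases hA b hb with rfl | hb'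
      exacts [hXY' hxX, hb'.1]
    refine ⟨hbY'.2, fun hba => ?_⟩
    have hbf : b ∈ f Y := (hcf Y hY).2 hba haf
    rcases hA b hb with rfl | hb'
    · exact hxY hbf
    · exact hbY'.2 (ha.2 ⟨hbf, hb'.2⟩ hba)
  refine ⟨a :: A, hanti.cons hinc, ⟨haf, hcomp⟩, Or.inr ⟨haX, hxA⟩, ?_⟩
  intro b hb
  rcases List.mem_cons.mp hb with rfl | hb
  · exact Or.inr ⟨haY, haX⟩
  · exact (hA b hb).imp_right fun hb' => ⟨hb'.1.1, hb'.2⟩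

end

/-- On a finite poset, for any choice function satisfying outcast and any `x ∈ f X`,
there is an antichain sequence `A` compatible with `f` such that `x ∈ f_A X`. -/
theorem exists_antichain_sequence {P : Type*} [PartialOrder P] [Fintype P]
    (f : Set P → Set P) (hcf : IsCF f) (ho : Outcast f)
    (X : Set P) (hX : IsLowerSet X) (x : P) (hx : x ∈ f X) :
    ∃ A : List P, IsAntichainSeq A ∧ Compatible f A ∧ x ∈ elemCF A X := by
  obtain ⟨A, hanti, hcomp, hxA, -⟩ :=
    exists_antichainSeq_compatibleWithin hcf ho hX hx Set.univ isLowerSet_univ (Set.subset_univ X)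
  exact ⟨A, hanti, Compatible.of_compatibleWithin_univ hcomp, hxA⟩
end

section
/- Every conservative choice function f on a finite poset P equals the union of the elementary choice functions f_A over all antichain sequences A compatible with f; i.e., f(X) = ⋃ {f_A(X) : A an antichain sequence compatible with f} for every ideal X. -/
/-!
Run the sequence relative to a shrinking ideal `U ⊇ X`, starting from `U = P`. If `x ∈ f U`,
stop with the term `x`. Otherwise outcast gives `f U ⊄ X`; append a minimal element `a` of
`f U \ X` and pass to `U` minus the filter of `a`, which still contains `X`. Minimality of `a`
and `f U` being an ideal keep the terms pairwise incomparable. Conversely, if `x ∈ f_A(X)` is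
below the first term `a_i ∈ X`, then `X` avoids the filter of `a_1, …, a_{i-1}`, and heredity
moves `x ∈ f(P − F(a_1, …, a_{i-1}))` down to `f X`.
-/

section CompatibleFrom

variable {P : Type*} [PartialOrder P] {f : Set P → Set P}

/-- Compatibility relative to the ideal `U`: each term lies in `f` of `U` minus the filter
generated by the earlier terms. -/
def CompatibleFrom (f : Set P → Set P) : Set P → List P → Prop
  | _, [] => True
  | U, a :: A => a ∈ f U ∧ CompatibleFrom f (U ∩ {y | ¬ a ≤ y}) A

lemma isLowerSet_setOf_not_le (a : P) : IsLowerSet {y : P | ¬ a ≤ y} :=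
  fun _ _ hzy hy haz => hy (haz.trans hzy)

lemma compatibleFrom_iff {U : Set P} {A : List P} :
    CompatibleFrom f U A ↔ ∀ i : Fin A.length,
      A.get i ∈ f (U ∩ {x | ∀ j : Fin A.length, j.1 < i.1 → ¬ A.get j ≤ x}) := by
  induction A generalizing U with
  | nil => simp [CompatibleFrom]
  | cons a A ih => simp [CompatibleFrom, ih, Fin.forall_fin_succ, Set.inter_assoc, Set.ofPred_and]

lemma compatible_iff_compatibleFrom_univ {A : List P} :
    Compatible f A ↔ CompatibleFrom f Set.univ A := by
  simp only [compatibleFrom_iff, Set.univ_inter, Compatible]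

lemma mem_of_compatibleFrom (hcf : IsCF f) {U : Set P} (hU : IsLowerSet U) {A : List P}
    (hA : CompatibleFrom f U A) {b : P} (hb : b ∈ A) : b ∈ U := by
  induction A generalizing U with
  | nil => simp at hb
  | cons a A ih =>
    rcases List.mem_cons.mp hb with rfl | hb
    · exact (hcf U hU).1 hA.1
    · exact (ih (hU.inter (isLowerSet_setOf_not_le a)) hA.2 hb).1

lemma elemCF_subset_of_compatibleFrom (hcf : IsCF f) (hh : Heredity f) {X U : Set P}
    (hX : IsLowerSet X) (hU : IsLowerSet U) (hXU : X ⊆ U) {A : List P}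
    (hA : CompatibleFrom f U A) : elemCF A X ⊆ f X := by
  induction A generalizing U with
  | nil => simp [elemCF]
  | cons a A ih =>
    rintro x (⟨hxX, hxa⟩ | ⟨haX, hx⟩)
    · exact hh X U hX hU hXU ⟨(hcf U hU).2 hxa hA.1, hxX⟩
    · exact ih (hU.inter (isLowerSet_setOf_not_le a))
        (fun y hy => ⟨hXU hy, fun hay => haX (hX hay hy)⟩) hA.2 hx

lemma exists_antichainSeq_compatibleFrom [Finite P] (hcf : IsCF f) (ho : Outcast f)
    {X : Set P} (hX : IsLowerSet X) {x : P} (hx : x ∈ f X) (U : Set P) (hU : IsLowerSet U)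
    (hXU : X ⊆ U) :
    ∃ A : List P, CompatibleFrom f U A ∧ IsAntichainSeq A ∧ (∀ b ∈ A, b = x ∨ b ∉ X) ∧
      x ∈ elemCF A X := by
  induction U using WellFoundedLT.induction with
  | _ U ih =>
  by_cases hxU : x ∈ f U
  · refine ⟨[x], ⟨hxU, trivial⟩, List.pairwise_singleton _ _, by simp, ?_⟩
    exact Or.inl ⟨(hcf X hX).1 hx, le_rfl⟩
  have hfUX : (f U \ X).Nonempty :=
    Set.sdiff_nonempty.mpr fun hsub => hxU (ho X U hX hU hsub hXU ▸ hx)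
  obtain ⟨a, ⟨haU, haX⟩, ha_min⟩ := (Set.toFinite _).exists_minimal hfUX
  set U' := U ∩ {y | ¬ a ≤ y}
  have hU' : IsLowerSet U' := hU.inter (isLowerSet_setOf_not_le a)
  have hU'U : U' < U := (Set.ssubset_iff_of_subset Set.inter_subset_left).mpr
    ⟨a, (hcf U hU).1 haU, fun h => h.2 le_rfl⟩
  obtain ⟨A, hA, hanti, hAX, hxA⟩ :=
    ih U' hU'U hU' fun y hy => ⟨hXU hy, fun hay => haX (hX hay hy)⟩
  refine ⟨a :: A, ⟨haU, hA⟩, List.pairwise_cons.mpr ⟨fun b hb => ?_, hanti⟩, ?_,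
    Or.inr ⟨haX, hxA⟩⟩
  · have hab : ¬ a ≤ b := (mem_of_compatibleFrom hcf hU' hA hb).2
    refine ⟨hab, fun hba => ?_⟩
    have hbU : b ∈ f U := (hcf U hU).2 hba haU
    rcases hAX b hb with rfl | hbX
    · exact hxU hbU
    · exact hab (ha_min ⟨hbU, hbX⟩ hba)
  · simpa [haX] using hAX

end CompatibleFrom

/-- Main theorem (finite case): every conservative choice function on a finite poset
is the union of the elementary choice functions of antichain sequences compatible with it. -/
theorem conservative_eq_union_elemCF {P : Type*} [PartialOrder P] [Fintype P]
    (f : Set P → Set P) (hcf : IsCF f) (hh : Heredity f) (ho : Outcast f) :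
    ∀ X : Set P, IsLowerSet X →
      f X = {x | ∃ A : List P, IsAntichainSeq A ∧ Compatible f A ∧ x ∈ elemCF A X} := by
  intro X hX
  ext x
  constructor
  · intro hx
    obtain ⟨A, hA, hanti, -, hxA⟩ :=
      exists_antichainSeq_compatibleFrom hcf ho hX hx Set.univ isLowerSet_univ X.subset_univ
    exact ⟨A, hanti, compatible_iff_compatibleFrom_univ.mpr hA, hxA⟩
  · rintro ⟨A, -, hA, hxA⟩
    exact elemCF_subset_of_compatibleFrom hcf hh hX isLowerSet_univ X.subset_univ
      (compatible_iff_compatibleFrom_univ.mp hA) hxA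
end

section
/- Let f = f_A and g = f_B be elementary choice functions on a poset P associated with antichain sequences A = (a_1,...,a_n) and B = (b_1,...,b_k), with g(X) ⊆ f(X) for all ideals X. If a_j = b_j for all j < i but a_i ≠ b_i and b_i exists, then b_i < a_i. -/
/-!
Let `X` be the ideal of elements lying above none of the common prefix `a_1, …, a_{i-1}`.
The first term of `B` inside `X` is `b_i`, so `b_i ∈ f_B(X) ⊆ f_A(X)`; the first term of `A`
inside `X` is `a_i`, so `b_i ≤ a_j` for some `j ≤ i`. For `j < i` this says `b_i ≤ b_j`,
which the antichain `B` forbids, hence `b_i ≤ a_i`, and `b_i ≠ a_i`.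
-/

section

variable {P : Type*} [PartialOrder P]

lemma IsAntichainSeq.incomparable {L : List P}
    (hL : IsAntichainSeq L) {m n : ℕ} (hmn : m < n) (hn : n < L.length) :
    ¬ L[m] ≤ L[n] ∧ ¬ L[n] ≤ L[m] :=
  List.pairwise_iff_getElem.mp hL m n (hmn.trans hn) hn hmn

lemma mem_elemCF (L : List P) (X : Set P) (y : P) :
    y ∈ elemCF L X ↔
      ∃ n, ∃ h : n < L.length, y ∈ X ∧ y ≤ L[n] ∧ ∀ m (hm : m < n), L[m]'(hm.trans h) ∉ X := by
  induction L with
  | nil => simp [elemCF]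
  | cons a as ih =>
    constructor
    · rintro (⟨hyX, hya⟩ | ⟨haX, hy⟩)
      · exact ⟨0, by simp, hyX, hya, by omega⟩
      · obtain ⟨n, hn, hyX, hyl, hall⟩ := ih.mp hy
        refine ⟨n + 1, by simpa using hn, hyX, by simpa using hyl, ?_⟩
        rintro (_ | m) hm
        · simpa using haX
        · simpa using hall m (by omega)
    · rintro ⟨_ | n, hn, hyX, hyl, hall⟩
      · exact Or.inl ⟨hyX, by simpa using hyl⟩
      · refine Or.inr ⟨by simpa using hall 0 (by omega),
          ih.mpr ⟨n, by simpa using hn, hyX, by simpa using hyl, fun m hm => ?_⟩⟩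
        simpa using hall (m + 1) (by omega)

lemma mem_elemCF_of_first_mem {L : List P} {X : Set P} {i : ℕ}
    (hi : i < L.length) (hiX : L[i] ∈ X) (hbefore : ∀ m (hm : m < i), L[m]'(hm.trans hi) ∉ X)
    (y : P) : y ∈ elemCF L X ↔ y ∈ X ∧ ∃ n, ∃ hn : n ≤ i, y ≤ L[n]'(hn.trans_lt hi) := by
  rw [mem_elemCF]
  constructor
  · rintro ⟨n, hn, hyX, hyl, hall⟩
    have hni : n ≤ i := not_lt.mp fun hin => hall i hin hiX
    exact ⟨hyX, n, hni, hyl⟩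
  · rintro ⟨hyX, n, hni, hyl⟩
    exact ⟨n, hni.trans_lt hi, hyX, hyl, fun m hm => hbefore m (hm.trans_le hni)⟩

end

/-- Lemma 1: if `f_B ⊆ f_A` for antichain sequences `A`, `B` agreeing before index `i`,
and `a_i ≠ b_i` with `b_i` present, then `b_i < a_i`. -/
theorem elemCF_subset_lt {P : Type*} [PartialOrder P] (A B : List P)
    (hAanti : IsAntichainSeq A) (hBanti : IsAntichainSeq B)
    (hsub : ∀ X : Set P, IsLowerSet X → elemCF B X ⊆ elemCF A X)
    (i : ℕ) (hiA : i < A.length) (hiB : i < B.length)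
    (hagree : ∀ j (hj : j < i), A[j]'(hj.trans hiA) = B[j]'(hj.trans hiB))
    (hne : A[i]'hiA ≠ B[i]'hiB) :
    B[i]'hiB < A[i]'hiA := by
  set X : Set P := {x | ∀ j (hj : j < i), ¬ A[j]'(hj.trans hiA) ≤ x}
  have hXlow : IsLowerSet X := fun x y hyx hxX j hj hle => hxX j hj (hle.trans hyx)
  have hAX : ∀ m (hm : m < i), A[m]'(hm.trans hiA) ∉ X := fun m hm hmX => hmX m hm le_rfl
  have hBX : ∀ m (hm : m < i), B[m]'(hm.trans hiB) ∉ X := fun m hm => hagree m hm ▸ hAX m hm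
  have hAiX : A[i] ∈ X := fun j hj => (hAanti.incomparable hj hiA).1
  have hBiX : B[i] ∈ X := fun j hj => hagree j hj ▸ (hBanti.incomparable hj hiB).1
  have hBi : B[i] ∈ elemCF B X :=
    (mem_elemCF_of_first_mem hiB hBiX hBX _).mpr ⟨hBiX, i, le_rfl, le_rfl⟩
  obtain ⟨-, n, hni, hle⟩ := (mem_elemCF_of_first_mem hiA hAiX hAX _).mp (hsub X hXlow hBi)
  obtain hni | rfl := hni.lt_or_eq
  · exact absurd (hagree n hni ▸ hle) (hBanti.incomparable hni hiB).2
  · exact hle.lt_of_ne (Ne.symm hne)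
end

section
/- Elementary choice functions associated with antichain sequences on a finite poset are join-irreducible: if f_A = g ∪ h where g and h are conservative choice functions, then g = f_A or h = f_A. -/
/-!
Write `X k` for the ideal of elements lying above none of `a_1, …, a_{k-1}`; for an antichain, the
only term of `A` in `f_A (X k)` is `a_k`. Suppose `a_k ∉ g (X k)` and `a_l ∉ h (X l)` with `k < l`.
By outcast, `g` takes the value `g (X k)` on the ideal `S = g (X k) ∪ X l`, and `f_A S` contains
`a_l`, which heredity keeps out of `h S`; so `a_l ∈ g (X k) ⊆ f_A (X k)`, which is absurd.
Hence `A` is compatible with `g` or with `h` (`a_k ∈ f (X k)` for all `k`), and a conservative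
choice function below `f_A` with which `A` is compatible is `f_A` itself.
-/

section AntichainSeq

variable {P : Type*} [PartialOrder P]

def avoidPrefix (A : List P) (k : Fin A.length) : Set P :=
  {x | ∀ j : Fin A.length, j < k → ¬ A.get j ≤ x}

lemma isLowerSet_avoidPrefix (A : List P) (k : Fin A.length) : IsLowerSet (avoidPrefix A k) :=
  fun _ _ hyx hx j hjk hle => hx j hjk (hle.trans hyx)

lemma avoidPrefix_anti (A : List P) {k l : Fin A.length} (hkl : k ≤ l) :
    avoidPrefix A l ⊆ avoidPrefix A k :=
  fun _ hx j hjk => hx j (hjk.trans_le hkl)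

lemma IsAntichainSeq.get_not_le {A : List P} (hA : IsAntichainSeq A) {i j : Fin A.length}
    (hij : i ≠ j) : ¬ A.get i ≤ A.get j := by
  rcases hij.lt_or_gt with hlt | hlt
  · exact (List.pairwise_iff_get.mp hA i j hlt).1
  · exact (List.pairwise_iff_get.mp hA j i hlt).2

lemma IsAntichainSeq.get_mem_avoidPrefix {A : List P} (hA : IsAntichainSeq A)
    (k : Fin A.length) : A.get k ∈ avoidPrefix A k :=
  fun _ hjk => hA.get_not_le hjk.ne

lemma mem_elemCF_s13 {A : List P} {X : Set P} {y : P} :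
    y ∈ elemCF A X ↔ y ∈ X ∧ ∃ j : Fin A.length, y ≤ A.get j ∧
      ∀ i : Fin A.length, i < j → A.get i ∉ X := by
  induction A with
  | nil => simp [elemCF]
  | cons a as ih =>
    simp only [elemCF, Set.mem_union, Set.mem_inter_iff, Set.mem_ofPred_eq, ih, List.length_cons,
      Fin.exists_fin_succ, Fin.forall_fin_succ, List.get_cons_zero, Fin.succ_lt_succ_iff,
      Fin.not_lt_zero, Fin.succ_pos]
    tauto

lemma IsAntichainSeq.get_mem_elemCF_avoidPrefix {A : List P} (hA : IsAntichainSeq A)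
    (k : Fin A.length) : A.get k ∈ elemCF A (avoidPrefix A k) :=
  mem_elemCF_s13.mpr ⟨hA.get_mem_avoidPrefix k, k, le_rfl, fun i hik hi => hi i hik le_rfl⟩

lemma IsAntichainSeq.eq_of_get_mem_elemCF_avoidPrefix {A : List P} (hA : IsAntichainSeq A)
    {i k : Fin A.length} (hi : A.get i ∈ elemCF A (avoidPrefix A k)) : i = k := by
  obtain ⟨hiX, j, hij, hj⟩ := mem_elemCF_s13.mp hi
  have hki : k ≤ i := not_lt.mp fun hik => hiX i hik le_rfl
  have hjk : j ≤ k := not_lt.mp fun hkj => hj k hkj (hA.get_mem_avoidPrefix k)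
  obtain rfl : i = j := by_contra fun hne => hA.get_not_le hne hij
  exact le_antisymm hjk hki

lemma IsAntichainSeq.false_of_not_mem_avoidPrefix {A : List P} (hA : IsAntichainSeq A)
    {g h : Set P → Set P} (hgcf : IsCF g) (hgo : Outcast g) (hhh : Heredity h)
    (hunion : ∀ X : Set P, IsLowerSet X → elemCF A X = g X ∪ h X)
    {k l : Fin A.length} (hkl : k < l)
    (hk : A.get k ∉ g (avoidPrefix A k)) (hl : A.get l ∉ h (avoidPrefix A l)) : False := by
  have hXk := isLowerSet_avoidPrefix A k
  have hXl := isLowerSet_avoidPrefix A l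
  obtain ⟨hgXk, hgXk_lower⟩ := hgcf _ hXk
  have hg_sub : g (avoidPrefix A k) ⊆ elemCF A (avoidPrefix A k) :=
    hunion _ hXk ▸ Set.subset_union_left
  set S := g (avoidPrefix A k) ∪ avoidPrefix A l
  have hS : IsLowerSet S := hgXk_lower.union hXl
  have hgS : g S = g (avoidPrefix A k) :=
    hgo S _ hS hXk Set.subset_union_left (Set.union_subset hgXk (avoidPrefix_anti A hkl.le))
  have hprefix : ∀ i : Fin A.length, i < l → A.get i ∉ S := by
    rintro i hil (hig | hiX)
    · obtain rfl := hA.eq_of_get_mem_elemCF_avoidPrefix (hg_sub hig)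
      exact hk hig
    · exact hiX i hil le_rfl
  have hlS : A.get l ∈ g S ∪ h S :=
    hunion S hS ▸ mem_elemCF_s13.mpr ⟨Or.inr (hA.get_mem_avoidPrefix l), l, le_rfl, hprefix⟩
  have hlh : A.get l ∉ h S := fun hmem =>
    hl (hhh _ S hXl hS Set.subset_union_right ⟨hmem, hA.get_mem_avoidPrefix l⟩)
  have hlg : A.get l ∈ g (avoidPrefix A k) := hgS ▸ hlS.resolve_right hlh
  exact hkl.ne' (hA.eq_of_get_mem_elemCF_avoidPrefix (hg_sub hlg))

lemma IsAntichainSeq.compatible_or_compatible {A : List P} (hA : IsAntichainSeq A)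
    {g h : Set P → Set P} (hgcf : IsCF g) (hgh : Heredity g) (hgo : Outcast g)
    (hhcf : IsCF h) (hhh : Heredity h) (hho : Outcast h)
    (hunion : ∀ X : Set P, IsLowerSet X → elemCF A X = g X ∪ h X) :
    Compatible g A ∨ Compatible h A := by
  have hunion' : ∀ X : Set P, IsLowerSet X → elemCF A X = h X ∪ g X := fun X hX =>
    (hunion X hX).trans (Set.union_comm _ _)
  refine or_iff_not_imp_left.mpr fun hg l => by_contra fun hl => ?_
  obtain ⟨k, hk⟩ := not_forall.mp hg
  change A.get k ∉ g (avoidPrefix A k) at hk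
  change A.get l ∉ h (avoidPrefix A l) at hl
  rcases lt_trichotomy k l with hkl | rfl | hlk
  · exact hA.false_of_not_mem_avoidPrefix hgcf hgo hhh hunion hkl hk hl
  · have hmem := hunion _ (isLowerSet_avoidPrefix A k) ▸ hA.get_mem_elemCF_avoidPrefix k
    exact hmem.elim hk hl
  · exact hA.false_of_not_mem_avoidPrefix hhcf hho hgh hunion' hlk hl hk

lemma eq_elemCF_of_compatible {A : List P} {g : Set P → Set P}
    (hgcf : IsCF g) (hgh : Heredity g) (hcompat : Compatible g A)
    (hle : ∀ X : Set P, IsLowerSet X → g X ⊆ elemCF A X) :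
    ∀ X : Set P, IsLowerSet X → g X = elemCF A X := by
  refine fun X hX => (hle X hX).antisymm fun y hy => ?_
  obtain ⟨hyX, j, hyj, hj⟩ := mem_elemCF_s13.mp hy
  have hXj : X ⊆ avoidPrefix A j := fun x hx i hij hix => hj i hij (hX hix hx)
  have hyg : y ∈ g (avoidPrefix A j) :=
    (hgcf _ (isLowerSet_avoidPrefix A j)).2 hyj (hcompat j)
  exact hgh X _ hX (isLowerSet_avoidPrefix A j) hXj ⟨hyg, hyX⟩

end AntichainSeq

theorem elemCF_join_irreducible_general {P : Type*} [PartialOrder P]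
    (A : List P) (hA : IsAntichainSeq A)
    (g h : Set P → Set P)
    (hgcf : IsCF g) (hgh : Heredity g) (hgo : Outcast g)
    (hhcf : IsCF h) (hhh : Heredity h) (hho : Outcast h)
    (hunion : ∀ X : Set P, IsLowerSet X → elemCF A X = g X ∪ h X) :
    (∀ X : Set P, IsLowerSet X → g X = elemCF A X) ∨
      (∀ X : Set P, IsLowerSet X → h X = elemCF A X) := by
  rcases hA.compatible_or_compatible hgcf hgh hgo hhcf hhh hho hunion with hg | hh
  · exact Or.inl <| eq_elemCF_of_compatible hgcf hgh hg fun X hX =>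
      hunion X hX ▸ Set.subset_union_left
  · exact Or.inr <| eq_elemCF_of_compatible hhcf hhh hh fun X hX =>
      hunion X hX ▸ Set.subset_union_right

/-- Elementary choice functions of antichain sequences on a finite poset are
join-irreducible among conservative choice functions. -/
theorem elemCF_join_irreducible {P : Type*} [PartialOrder P] [Fintype P]
    (A : List P) (hA : IsAntichainSeq A)
    (g h : Set P → Set P)
    (hgcf : IsCF g) (hgh : Heredity g) (hgo : Outcast g)
    (hhcf : IsCF h) (hhh : Heredity h) (hho : Outcast h)
    (hunion : ∀ X : Set P, IsLowerSet X → elemCF A X = g X ∪ h X) :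
    (∀ X : Set P, IsLowerSet X → g X = elemCF A X) ∨
      (∀ X : Set P, IsLowerSet X → h X = elemCF A X) :=
  elemCF_join_irreducible_general A hA g h hgcf hgh hgo hhcf hhh hho hunion
end

section
/- For any well-ordered sequence A = (a_i)_{i∈I} of elements of a poset P (I a well-ordered index set), the associated elementary choice function f_A is conservative (satisfies heredity and outcast). -/
/-- The elementary choice function of a well-ordered sequence `a : ι → P`:
`X ∩ I({a_j : j ⪯ i(X)})` where `i(X)` is the least index with `a_{i(X)} ∈ X`,
and `X ∩ I({a_j : j ∈ ι})` if no term of the sequence lies in `X`.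
(Here `j ⪯ i(X)` is expressed by `∀ k < j, a k ∉ X`.) -/
def elemCFW {P : Type*} [PartialOrder P] {ι : Type*} [LinearOrder ι]
    (a : ι → P) (X : Set P) : Set P :=
  X ∩ {y | ∃ j : ι, (∀ k : ι, k < j → a k ∉ X) ∧ y ≤ a j}

/-- The well-ordered sequence `a` is compatible with `f`:
`a i ∈ f (P − ⋃_{j ≺ i} F(a_j))` for every `i`. -/
def CompatibleW {P : Type*} [PartialOrder P] {ι : Type*} [LinearOrder ι]
    (f : Set P → Set P) (a : ι → P) : Prop :=
  ∀ i : ι, a i ∈ f {x | ∀ j : ι, j < i → ¬ a j ≤ x}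

/-!
Write `f = elemCFW a`. Heredity needs no well-ordering: shrinking `X` can only delay the first
term of the sequence lying in `X`. For outcast, the first term `a m` lying in `B` belongs to
`f B ⊆ A`, so `A` and `B` have the same first term, and `f A`, `f B` are the traces on `A` and on
`B` of one and the same ideal, which agree because `f B ⊆ A ⊆ B`.
-/

section
variable {P : Type*} [PartialOrder P] {ι : Type*} [LinearOrder ι] (a : ι → P) {A B : Set P}

theorem elemCFW_inter_subset_of_subset (hAB : A ⊆ B) : elemCFW a B ∩ A ⊆ elemCFW a A :=
  fun _ ⟨⟨_, j, hj, hle⟩, hyA⟩ => ⟨hyA, j, fun k hk hkA => hj k hk (hAB hkA), hle⟩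

theorem elemCFW_heredity : Heredity (elemCFW a) :=
  fun _ _ _ _ => elemCFW_inter_subset_of_subset a

theorem forall_lt_apply_notMem_iff_of_elemCFW_subset [WellFoundedLT ι]
    (hfB : elemCFW a B ⊆ A) (hAB : A ⊆ B) (j : ι) :
    (∀ k < j, a k ∉ A) ↔ (∀ k < j, a k ∉ B) := by
  refine ⟨fun hA k hk hkB => ?_, fun hB k hk hkA => hB k hk (hAB hkA)⟩
  obtain ⟨m, hmB, hmin⟩ := wellFounded_lt.has_min {i | a i ∈ B} ⟨k, hkB⟩
  have hmA : a m ∈ A := hfB ⟨hmB, m, fun l hl hlB => hmin l hlB hl, le_rfl⟩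
  exact hA m ((not_lt.1 (hmin k hkB)).trans_lt hk) hmA

theorem elemCFW_eq_of_elemCFW_subset [WellFoundedLT ι] (hfB : elemCFW a B ⊆ A) (hAB : A ⊆ B) :
    elemCFW a A = elemCFW a B := by
  have hideal :
      {y | ∃ j, (∀ k < j, a k ∉ A) ∧ y ≤ a j} = {y | ∃ j, (∀ k < j, a k ∉ B) ∧ y ≤ a j} := by
    simp only [forall_lt_apply_notMem_iff_of_elemCFW_subset a hfB hAB]
  unfold elemCFW at hfB ⊢
  rw [hideal]
  exact (Set.inter_subset_inter_left _ hAB).antisymm fun y hy => ⟨hfB hy, hy.2⟩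

theorem elemCFW_outcast [WellFoundedLT ι] : Outcast (elemCFW a) :=
  fun _ _ _ _ => elemCFW_eq_of_elemCFW_subset a

end

/-- The elementary choice function of any well-ordered sequence is conservative. -/
theorem elemCFW_conservative {P : Type*} [PartialOrder P] {ι : Type*} [LinearOrder ι]
    [WellFoundedLT ι] (a : ι → P) :
    Heredity (elemCFW a) ∧ Outcast (elemCFW a) :=
  ⟨elemCFW_heredity a, elemCFW_outcast a⟩
end

section
/- The linear order of any gallery is a well-order: if U ⊆ P with linear order ≺_U satisfies that every proper initial segment V of U equals [≺_U x] for x = p(F(V)), where p is a fixed selector, then (U, ≺_U) is well-ordered. -/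
/-- The filter (upper set) generated by a subset. -/
def upClo {P : Type*} [PartialOrder P] (V : Set P) : Set P :=
  {x | ∃ v ∈ V, v ≤ x}

/-- `(U, lt)` is a gallery for the selector `p` (and choice function `f`):
`lt` is a strict linear order on `U`, and every initial segment `V ≠ U` satisfies
`F(V) ∈ 𝓕` (i.e. `f (P − F(V)) ≠ ∅`), `x := p (F V) ∈ U` and `V = [lt x]`. -/
def GalleryOn {P : Type*} [PartialOrder P] (f : Set P → Set P) (p : Set P → P)
    (U : Set P) (lt : P → P → Prop) : Prop :=
  (∀ x ∈ U, ∀ y ∈ U, ∀ z ∈ U, lt x y → lt y z → lt x z) ∧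
  (∀ x ∈ U, ¬ lt x x) ∧
  (∀ x ∈ U, ∀ y ∈ U, lt x y ∨ x = y ∨ lt y x) ∧
  (∀ V ⊆ U, (∀ x ∈ V, ∀ y ∈ U, lt y x → y ∈ V) → V ≠ U →
    (f (Set.univ \ upClo V)).Nonempty ∧ p (upClo V) ∈ U ∧
      V = {y ∈ U | lt y (p (upClo V))})

section StrictLowerBounds

variable {α : Type*} {lt : α → α → Prop} {U S : Set α}

def strictLowerBoundsIn (lt : α → α → Prop) (U S : Set α) : Set α :=
  {y ∈ U | ∀ s ∈ S, lt y s}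

lemma strictLowerBoundsIn_subset : strictLowerBoundsIn lt U S ⊆ U :=
  fun _ hy => hy.1

lemma strictLowerBoundsIn_isInitial
    (htrans : ∀ x ∈ U, ∀ y ∈ U, ∀ z ∈ U, lt x y → lt y z → lt x z) (hSU : S ⊆ U) :
    ∀ x ∈ strictLowerBoundsIn lt U S, ∀ y ∈ U, lt y x → y ∈ strictLowerBoundsIn lt U S :=
  fun x hx y hy hyx => ⟨hy, fun s hs => htrans y hy x hx.1 s (hSU hs) hyx (hx.2 s hs)⟩

lemma notMem_strictLowerBoundsIn (hirr : ∀ x ∈ U, ¬ lt x x) (hSU : S ⊆ U) {s : α}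
    (hs : s ∈ S) : s ∉ strictLowerBoundsIn lt U S :=
  fun h => hirr s (hSU hs) (h.2 s hs)

lemma strictLowerBoundsIn_ne (hirr : ∀ x ∈ U, ¬ lt x x) (hSU : S ⊆ U) (hS : S.Nonempty) :
    strictLowerBoundsIn lt U S ≠ U := by
  obtain ⟨s, hs⟩ := hS
  intro h
  have hsU := hSU hs
  rw [← h] at hsU
  exact notMem_strictLowerBoundsIn hirr hSU hs hsU

lemma least_of_strictLowerBoundsIn_eq (hirr : ∀ x ∈ U, ¬ lt x x)
    (htot : ∀ x ∈ U, ∀ y ∈ U, lt x y ∨ x = y ∨ lt y x) (hSU : S ⊆ U) {x : α} (hxU : x ∈ U)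
    (hx : strictLowerBoundsIn lt U S = {y ∈ U | lt y x}) :
    x ∈ S ∧ ∀ s ∈ S, s ≠ x → lt x s := by
  have below : ∀ s ∈ S, s ≠ x → lt x s := by
    intro s hs hsx
    rcases htot x hxU s (hSU hs) with h | rfl | h
    · exact h
    · exact (hsx rfl).elim
    · exact absurd (hx ▸ ⟨hSU hs, h⟩) (notMem_strictLowerBoundsIn hirr hSU hs)
  refine ⟨?_, below⟩
  by_contra hxS
  have hx_lower : x ∈ strictLowerBoundsIn lt U S :=
    ⟨hxU, fun s hs => below s hs fun h => hxS (h ▸ hs)⟩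
  exact hirr x hxU (hx ▸ hx_lower).2

end StrictLowerBounds

theorem gallery_wellOrdered_general {P : Type*} [PartialOrder P] (f : Set P → Set P)
    (p : Set P → P)
    (U : Set P) (lt : P → P → Prop) (hU : GalleryOn f p U lt) :
    ∀ S ⊆ U, S.Nonempty → ∃ m ∈ S, ∀ s ∈ S, s ≠ m → lt m s := by
  obtain ⟨htrans, hirr, htot, hsegment⟩ := hU
  intro S hSU hS
  obtain ⟨-, hxU, hx⟩ := hsegment _ strictLowerBoundsIn_subset
    (strictLowerBoundsIn_isInitial htrans hSU) (strictLowerBoundsIn_ne hirr hSU hS)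
  exact ⟨_, least_of_strictLowerBoundsIn_eq hirr htot hSU hxU hx⟩

/-- The order of any gallery is a well-order: every nonempty subset has a least element. -/
theorem gallery_wellOrdered {P : Type*} [PartialOrder P] (f : Set P → Set P)
    (p : Set P → P)
    (hp : ∀ F : Set P, IsUpperSet F → (f (Set.univ \ F)).Nonempty →
      p F ∈ f (Set.univ \ F))
    (U : Set P) (lt : P → P → Prop) (hU : GalleryOn f p U lt) :
    ∀ S ⊆ U, S.Nonempty → ∃ m ∈ S, ∀ s ∈ S, s ≠ m → lt m s :=
  gallery_wellOrdered_general f p U lt hU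
end

section
/- Any two galleries (with respect to a fixed selector p) are comparable: one of them is a continuation of the other, i.e., one is an initial segment of the other with the same induced order. -/
/-- Gallery `U'` continues gallery `U`: `U ⊆ U'`, the orders coincide on `U`,
and `U` is an initial segment of `U'`. -/
def Continues {P : Type*} [PartialOrder P] (U' U : Set P)
    (lt' lt : P → P → Prop) : Prop :=
  U ⊆ U' ∧ (∀ x ∈ U, ∀ y ∈ U, (lt x y ↔ lt' x y)) ∧
    (∀ x ∈ U, ∀ y ∈ U', lt' y x → y ∈ U)

/-!
The union `W` of all common initial segments of two galleries, on which their orders agree,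
is again such a segment. If `W` were a proper segment of both galleries, each of them would
continue `W` by the same element `p (upClo W)`, because the selector is shared; adjoining it
to `W` gives a larger common segment. Hence `W` is one of the two galleries.
-/

section Segments

variable {P : Type*} {U V A : Set P} {lt ltU ltV : P → P → Prop} {x : P}

def IsInitialSeg (U : Set P) (lt : P → P → Prop) (A : Set P) : Prop :=
  A ⊆ U ∧ ∀ x ∈ A, ∀ y ∈ U, lt y x → y ∈ A

theorem IsInitialSeg.subset_or_subset (htri : ∀ x ∈ U, ∀ y ∈ U, lt x y ∨ x = y ∨ lt y x)
    {B : Set P} (hA : IsInitialSeg U lt A) (hB : IsInitialSeg U lt B) : A ⊆ B ∨ B ⊆ A := by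
  refine or_iff_not_imp_left.2 fun hAB b hb => ?_
  obtain ⟨a, ha, haB⟩ := Set.not_subset.1 hAB
  rcases htri a (hA.1 ha) b (hB.1 hb) with hab | rfl | hba
  · exact absurd (hB.2 b hb a (hA.1 ha) hab) haB
  · exact absurd hb haB
  · exact hA.2 a ha b (hB.1 hb) hba

theorem isInitialSeg_sUnion {S : Set (Set P)} (hS : ∀ A ∈ S, IsInitialSeg U lt A) :
    IsInitialSeg U lt (⋃₀ S) :=
  ⟨Set.sUnion_subset fun A hA => (hS A hA).1,
    fun _ ⟨A, hA, hxA⟩ y hy hyx => ⟨A, hA, (hS A hA).2 _ hxA y hy hyx⟩⟩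

theorem isInitialSeg_insert_setOf_lt
    (htrans : ∀ x ∈ U, ∀ y ∈ U, ∀ z ∈ U, lt x y → lt y z → lt x z) (hx : x ∈ U) :
    IsInitialSeg U lt (insert x {y ∈ U | lt y x}) := by
  refine ⟨Set.insert_subset hx (Set.sep_subset _ _), ?_⟩
  rintro z (rfl | ⟨hzU, hzx⟩) y hyU hyz
  · exact Or.inr ⟨hyU, hyz⟩
  · exact Or.inr ⟨hyU, htrans y hyU z hzU x hx hyz hzx⟩

def IsCommonSeg (U V : Set P) (ltU ltV : P → P → Prop) (A : Set P) : Prop :=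
  IsInitialSeg U ltU A ∧ IsInitialSeg V ltV A ∧ ∀ x ∈ A, ∀ y ∈ A, (ltU x y ↔ ltV x y)

theorem IsCommonSeg.symm (h : IsCommonSeg U V ltU ltV A) : IsCommonSeg V U ltV ltU A :=
  ⟨h.2.1, h.1, fun x hx y hy => (h.2.2 x hx y hy).symm⟩

theorem isCommonSeg_sUnion (htri : ∀ x ∈ U, ∀ y ∈ U, ltU x y ∨ x = y ∨ ltU y x)
    {S : Set (Set P)} (hS : ∀ A ∈ S, IsCommonSeg U V ltU ltV A) :
    IsCommonSeg U V ltU ltV (⋃₀ S) := by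
  refine ⟨isInitialSeg_sUnion fun A hA => (hS A hA).1,
    isInitialSeg_sUnion fun A hA => (hS A hA).2.1, ?_⟩
  rintro x ⟨A, hA, hxA⟩ y ⟨B, hB, hyB⟩
  rcases (hS A hA).1.subset_or_subset htri (hS B hB).1 with hAB | hBA
  · exact (hS B hB).2.2 x (hAB hxA) y hyB
  · exact (hS A hA).2.2 x hxA y (hBA hyB)

theorem IsCommonSeg.insert
    (hirrU : ∀ x ∈ U, ¬ ltU x x)
    (htransU : ∀ x ∈ U, ∀ y ∈ U, ∀ z ∈ U, ltU x y → ltU y z → ltU x z)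
    (hirrV : ∀ x ∈ V, ¬ ltV x x)
    (htransV : ∀ x ∈ V, ∀ y ∈ V, ∀ z ∈ V, ltV x y → ltV y z → ltV x z)
    (hA : IsCommonSeg U V ltU ltV A) (hxU : x ∈ U) (hxV : x ∈ V)
    (hAU : A = {y ∈ U | ltU y x}) (hAV : A = {y ∈ V | ltV y x}) :
    IsCommonSeg U V ltU ltV (insert x A) := by
  have hltU : ∀ y ∈ A, ltU y x := fun y hy => (hAU ▸ hy).2
  have hltV : ∀ y ∈ A, ltV y x := fun y hy => (hAV ▸ hy).2
  refine ⟨hAU ▸ isInitialSeg_insert_setOf_lt htransU hxU,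
    hAV ▸ isInitialSeg_insert_setOf_lt htransV hxV, ?_⟩
  rintro y (rfl | hy) z (rfl | hz)
  · exact iff_of_false (hirrU _ hxU) (hirrV _ hxV)
  · exact iff_of_false
      (fun h => hirrU _ hxU (htransU _ hxU z (hA.1.1 hz) _ hxU h (hltU z hz)))
      (fun h => hirrV _ hxV (htransV _ hxV z (hA.2.1.1 hz) _ hxV h (hltV z hz)))
  · exact iff_of_true (hltU y hy) (hltV y hy)
  · exact hA.2.2 y hy z hz

theorem IsCommonSeg.continues [PartialOrder P] (h : IsCommonSeg U V ltU ltV U) :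
    Continues V U ltV ltU :=
  ⟨h.2.1.1, h.2.2, h.2.1.2⟩

end Segments

namespace GalleryOn

variable {P : Type*} [PartialOrder P] {f : Set P → Set P} {p : Set P → P} {U V A : Set P}
  {lt ltU ltV : P → P → Prop}

theorem lt_trans (h : GalleryOn f p U lt) :
    ∀ x ∈ U, ∀ y ∈ U, ∀ z ∈ U, lt x y → lt y z → lt x z :=
  h.1

theorem lt_irrefl (h : GalleryOn f p U lt) : ∀ x ∈ U, ¬ lt x x :=
  h.2.1

theorem trichotomous (h : GalleryOn f p U lt) :
    ∀ x ∈ U, ∀ y ∈ U, lt x y ∨ x = y ∨ lt y x :=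
  h.2.2.1

theorem select_mem (h : GalleryOn f p U lt) (hA : IsInitialSeg U lt A) (hne : A ≠ U) :
    p (upClo A) ∈ U :=
  (h.2.2.2 A hA.1 hA.2 hne).2.1

theorem eq_setOf_lt_select (h : GalleryOn f p U lt) (hA : IsInitialSeg U lt A) (hne : A ≠ U) :
    A = {y ∈ U | lt y (p (upClo A))} :=
  (h.2.2.2 A hA.1 hA.2 hne).2.2

theorem eq_or_eq_of_isCommonSeg_maximal (hU : GalleryOn f p U ltU) (hV : GalleryOn f p V ltV)
    {W : Set P} (hW : IsCommonSeg U V ltU ltV W)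
    (hmax : ∀ A, IsCommonSeg U V ltU ltV A → A ⊆ W) : W = U ∨ W = V := by
  by_contra! ⟨hWU, hWV⟩
  have hxU := hU.select_mem hW.1 hWU
  have hWU' := hU.eq_setOf_lt_select hW.1 hWU
  have hxW : p (upClo W) ∈ W :=
    hmax _ (hW.insert hU.lt_irrefl hU.lt_trans hV.lt_irrefl hV.lt_trans hxU
      (hV.select_mem hW.2.1 hWV) hWU' (hV.eq_setOf_lt_select hW.2.1 hWV)) (Set.mem_insert _ _)
  exact hU.lt_irrefl _ hxU ((Set.ext_iff.1 hWU' _).1 hxW).2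

end GalleryOn

theorem galleries_comparable_general {P : Type*} [PartialOrder P] (f : Set P → Set P)
    (p : Set P → P)
    (U V : Set P) (ltU ltV : P → P → Prop)
    (hU : GalleryOn f p U ltU) (hV : GalleryOn f p V ltV) :
    Continues U V ltU ltV ∨ Continues V U ltV ltU := by
  set W := ⋃₀ {A | IsCommonSeg U V ltU ltV A}
  have hW : IsCommonSeg U V ltU ltV W := isCommonSeg_sUnion hU.trichotomous fun _ hA => hA
  rcases hU.eq_or_eq_of_isCommonSeg_maximal hV hW fun _ hA => Set.subset_sUnion_of_mem hA
    with hWU | hWV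
  · exact Or.inr (hWU ▸ hW : IsCommonSeg U V ltU ltV U).continues
  · exact Or.inl (hWV ▸ hW.symm : IsCommonSeg V U ltV ltU V).continues

/-- Lemma 2: any two galleries (for the same selector) are comparable. -/
theorem galleries_comparable {P : Type*} [PartialOrder P] (f : Set P → Set P)
    (p : Set P → P)
    (hp : ∀ F : Set P, IsUpperSet F → (f (Set.univ \ F)).Nonempty →
      p F ∈ f (Set.univ \ F))
    (U V : Set P) (ltU ltV : P → P → Prop)
    (hU : GalleryOn f p U ltU) (hV : GalleryOn f p V ltV) :
    Continues U V ltU ltV ∨ Continues V U ltV ltU :=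
  galleries_comparable_general f p U V ltU ltV hU hV
end

section
/- Let f be a conservative choice function on a poset P, X an ideal, and x ∈ f(X). Then there exists a through gallery U (considered as a well-ordered sequence compatible with f) such that x ∈ f_U(X). Consequently, every conservative choice function on an arbitrary poset is the union of elementary choice functions associated with well-ordered sequences compatible with f. -/
/-- `(U, lt)` is a well-ordered subset of `P`. -/
def IsWellOrderOn {P : Type*} [PartialOrder P] (U : Set P) (lt : P → P → Prop) : Prop :=
  (∀ x ∈ U, ∀ y ∈ U, ∀ z ∈ U, lt x y → lt y z → lt x z) ∧
  (∀ x ∈ U, ¬ lt x x) ∧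
  (∀ x ∈ U, ∀ y ∈ U, lt x y ∨ x = y ∨ lt y x) ∧
  (∀ S ⊆ U, S.Nonempty → ∃ m ∈ S, ∀ s ∈ S, s ≠ m → lt m s)

/-- The well-ordered subset `(U, lt)` is compatible with `f`. -/
def SubsetCompatible {P : Type*} [PartialOrder P] (f : Set P → Set P)
    (U : Set P) (lt : P → P → Prop) : Prop :=
  ∀ u ∈ U, u ∈ f {x | ∀ v ∈ U, lt v u → ¬ v ≤ x}

/-- The elementary choice function of the well-ordered subset `(U, lt)`:
`X ∩ I({u ∈ U : u ⪯ u₀})` where `u₀` is the least element of `U ∩ X`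
(and `X ∩ I(U)` if `U ∩ X = ∅`). -/
def elemCFSub {P : Type*} [PartialOrder P] (U : Set P) (lt : P → P → Prop)
    (X : Set P) : Set P :=
  X ∩ {y | ∃ u ∈ U, (∀ v ∈ U, lt v u → v ∉ X) ∧ y ≤ u}

/-!
Iterate the selector transfinitely: the `o`-th term is chosen from `f` of the ideal of points not
above any earlier term. Each term escapes the upper closure of its predecessors, so the terms are
distinct and, by cardinality, the iteration must reach an ideal on which `f` is empty; the terms
before that point form a through gallery, compatible with `f` by construction. To catch a given
`x ∈ f X`, the selector takes `x` whenever it may and otherwise avoids `X`. As long as all terms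
lie outside `X`, the current ideal contains `X`, so by outcast `f` of it cannot lie inside `X`
without containing `x`. Hence the first term in `X` is `x`, and such a term exists because
otherwise outcast would give `f X = ∅`.
-/

universe u

open Set

section UpperClosure

variable {P : Type*} [PartialOrder P]

theorem isUpperSet_upClo (V : Set P) : IsUpperSet (upClo V) :=
  fun _ _ hab ⟨v, hv, hva⟩ => ⟨v, hv, hva.trans hab⟩

theorem isLowerSet_univ_diff_upClo (V : Set P) : IsLowerSet (univ \ upClo V) := by
  rw [← compl_eq_univ_sdiff]
  exact (isUpperSet_upClo V).compl

theorem setOf_forall_not_le (U : Set P) (lt : P → P → Prop) (u : P) :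
    {z | ∀ v ∈ U, lt v u → ¬ v ≤ z} = univ \ upClo {v ∈ U | lt v u} := by
  ext z
  simp only [upClo, mem_ofPred_eq, mem_sdiff, mem_univ, true_and, not_exists, not_and]
  exact ⟨fun h v ⟨hv, hlt⟩ => h v hv hlt, fun h v hv hlt => h v ⟨hv, hlt⟩⟩

end UpperClosure

section ImageOrder

variable {α P : Type*} [LinearOrder α] {g : α → P} {s : Set α}

def imageLT (g : α → P) (s : Set α) (a b : P) : Prop :=
  ∃ i ∈ s, ∃ j ∈ s, i < j ∧ g i = a ∧ g j = b

theorem imageLT_apply_iff (hg : s.InjOn g) {i j : α} (hi : i ∈ s) (hj : j ∈ s) :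
    imageLT g s (g i) (g j) ↔ i < j := by
  constructor
  · rintro ⟨i', hi', j', hj', hlt, hgi, hgj⟩
    rwa [← hg hi' hi hgi, ← hg hj' hj hgj]
  · exact fun h => ⟨i, hi, j, hj, h, rfl, rfl⟩

theorem isWellOrderOn_image [PartialOrder P] [WellFoundedLT α] (hg : s.InjOn g) :
    IsWellOrderOn (g '' s) (imageLT g s) := by
  refine ⟨?_, ?_, ?_, ?_⟩
  · rintro _ ⟨i, hi, rfl⟩ _ ⟨j, hj, rfl⟩ _ ⟨k, hk, rfl⟩ hij hjk
    rw [imageLT_apply_iff hg hi hj] at hij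
    rw [imageLT_apply_iff hg hj hk] at hjk
    exact (imageLT_apply_iff hg hi hk).2 (hij.trans hjk)
  · rintro _ ⟨i, hi, rfl⟩ hii
    exact lt_irrefl i ((imageLT_apply_iff hg hi hi).1 hii)
  · rintro _ ⟨i, hi, rfl⟩ _ ⟨j, hj, rfl⟩
    rw [imageLT_apply_iff hg hi hj, imageLT_apply_iff hg hj hi]
    rcases lt_trichotomy i j with h | rfl | h
    exacts [Or.inl h, Or.inr (Or.inl rfl), Or.inr (Or.inr h)]
  · intro S hS ⟨_, hiS⟩
    obtain ⟨i, hi, rfl⟩ := hS hiS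
    obtain ⟨m, ⟨hm, hmS⟩, hmin⟩ := wellFounded_lt.has_min (s ∩ g ⁻¹' S) ⟨i, hi, hiS⟩
    refine ⟨g m, hmS, ?_⟩
    rintro _ hjS hne
    obtain ⟨j, hj, rfl⟩ := hS hjS
    refine (imageLT_apply_iff hg hm hj).2 (lt_of_le_of_ne ?_ ?_)
    · exact not_lt.1 (hmin j ⟨hj, hjS⟩)
    · rintro rfl
      exact hne rfl

variable {κ o : α}

theorem setOf_imageLT_Iio (hg : (Iio κ).InjOn g) (ho : o < κ) :
    {y ∈ g '' Iio κ | imageLT g (Iio κ) y (g o)} = g '' Iio o := by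
  ext y
  constructor
  · rintro ⟨⟨i, hi, rfl⟩, hlt⟩
    exact ⟨i, (imageLT_apply_iff hg hi ho).1 hlt, rfl⟩
  · rintro ⟨i, hi, rfl⟩
    have hiκ : i < κ := hi.trans ho
    exact ⟨⟨i, hiκ, rfl⟩, (imageLT_apply_iff hg hiκ ho).2 hi⟩

theorem exists_eq_image_Iio_of_initialSegment [WellFoundedLT α] (hg : (Iio κ).InjOn g)
    {V : Set P} (hVU : V ⊆ g '' Iio κ)
    (hVdown : ∀ a ∈ V, ∀ b ∈ g '' Iio κ, imageLT g (Iio κ) b a → b ∈ V)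
    (hne : V ≠ g '' Iio κ) : ∃ o < κ, V = g '' Iio o := by
  obtain ⟨_, ⟨i, hi, rfl⟩, hiV⟩ := exists_of_ssubset (hVU.ssubset_of_ne hne)
  obtain ⟨o, ⟨ho, hoV⟩, hmin⟩ :=
    wellFounded_lt.has_min {i | i < κ ∧ g i ∉ V} ⟨i, hi, hiV⟩
  refine ⟨o, ho, Subset.antisymm ?_ ?_⟩
  · intro v hv
    obtain ⟨j, hj, rfl⟩ := hVU hv
    refine ⟨j, lt_of_not_ge fun hoj => hoV ?_, rfl⟩
    rcases hoj.lt_or_eq with hoj | rfl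
    · exact hVdown _ hv _ ⟨o, ho, rfl⟩ ((imageLT_apply_iff hg ho hj).2 hoj)
    · exact hv
  · rintro _ ⟨j, hj, rfl⟩
    by_contra hjV
    exact hmin j ⟨hj.trans ho, hjV⟩ hj

end ImageOrder

section Gallery

variable {P : Type u} [PartialOrder P] {f : Set P → Set P} {p : Set P → P} {X : Set P}
  {o o' : Ordinal.{u}}

def IsSelector (f : Set P → Set P) (p : Set P → P) : Prop :=
  ∀ F : Set P, IsUpperSet F → (f (univ \ F)).Nonempty → p F ∈ f (univ \ F)

noncomputable def galleryTerm (p : Set P → P) (o : Ordinal.{u}) : P :=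
  p (upClo (range fun i : Iio o => galleryTerm p i.1))
termination_by o
decreasing_by exact i.2

theorem galleryTerm_eq (p : Set P → P) (o : Ordinal.{u}) :
    galleryTerm p o = p (upClo (galleryTerm p '' Iio o)) := by
  rw [galleryTerm, image_eq_range]

def galleryStage (p : Set P → P) (o : Ordinal.{u}) : Set P :=
  univ \ upClo (galleryTerm p '' Iio o)

theorem galleryTerm_mem (hp : IsSelector f p) (h : (f (galleryStage p o)).Nonempty) :
    galleryTerm p o ∈ f (galleryStage p o) := by
  rw [galleryTerm_eq]
  exact hp _ (isUpperSet_upClo _) h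

theorem galleryTerm_ne_of_lt (hcf : IsCF f) (hp : IsSelector f p)
    (h : (f (galleryStage p o)).Nonempty) (ho' : o' < o) : galleryTerm p o' ≠ galleryTerm p o :=
  fun heq => ((hcf _ (isLowerSet_univ_diff_upClo _)).1 (galleryTerm_mem hp h)).2
    ⟨_, ⟨o', ho', rfl⟩, heq.le⟩

theorem exists_galleryStage_eq_empty (hcf : IsCF f) (hp : IsSelector f p) :
    ∃ o, f (galleryStage p o) = ∅ := by
  by_contra! h
  refine not_injective_of_ordinal (galleryTerm p) fun o₁ o₂ heq => ?_
  by_contra hne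
  rcases lt_or_gt_of_ne hne with h12 | h21
  · exact galleryTerm_ne_of_lt hcf hp (h o₂) h12 heq
  · exact galleryTerm_ne_of_lt hcf hp (h o₁) h21 heq.symm

noncomputable def galleryLength (f : Set P → Set P) (p : Set P → P) : Ordinal.{u} :=
  sInf {o | f (galleryStage p o) = ∅}

theorem galleryStage_galleryLength (hcf : IsCF f) (hp : IsSelector f p) :
    f (galleryStage p (galleryLength f p)) = ∅ :=
  csInf_mem (exists_galleryStage_eq_empty hcf hp)

theorem nonempty_galleryStage_of_lt (h : o < galleryLength f p) :
    (f (galleryStage p o)).Nonempty :=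
  nonempty_iff_ne_empty.2 <|
    notMem_of_lt_csInf (s := {o | f (galleryStage p o) = ∅}) h (OrderBot.bddBelow _)

theorem injOn_galleryTerm (hcf : IsCF f) (hp : IsSelector f p) :
    (Iio (galleryLength f p)).InjOn (galleryTerm p) := by
  intro o₁ h₁ o₂ h₂ heq
  by_contra hne
  rcases lt_or_gt_of_ne hne with h12 | h21
  · exact galleryTerm_ne_of_lt hcf hp (nonempty_galleryStage_of_lt h₂) h12 heq
  · exact galleryTerm_ne_of_lt hcf hp (nonempty_galleryStage_of_lt h₁) h21 heq.symm

def gallery (f : Set P → Set P) (p : Set P → P) : Set P :=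
  galleryTerm p '' Iio (galleryLength f p)

def galleryLT (f : Set P → Set P) (p : Set P → P) : P → P → Prop :=
  imageLT (galleryTerm p) (Iio (galleryLength f p))

theorem isWellOrderOn_gallery (hcf : IsCF f) (hp : IsSelector f p) :
    IsWellOrderOn (gallery f p) (galleryLT f p) :=
  isWellOrderOn_image (injOn_galleryTerm hcf hp)

theorem setOf_galleryLT (hcf : IsCF f) (hp : IsSelector f p) (ho : o < galleryLength f p) :
    {y ∈ gallery f p | galleryLT f p y (galleryTerm p o)} = galleryTerm p '' Iio o :=
  setOf_imageLT_Iio (injOn_galleryTerm hcf hp) ho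

theorem galleryOn_gallery (hcf : IsCF f) (hp : IsSelector f p) :
    GalleryOn f p (gallery f p) (galleryLT f p) := by
  obtain ⟨htrans, hirr, htotal, -⟩ := isWellOrderOn_gallery hcf hp
  refine ⟨htrans, hirr, htotal, fun V hVU hVdown hne => ?_⟩
  obtain ⟨o, ho, rfl⟩ :=
    exists_eq_image_Iio_of_initialSegment (injOn_galleryTerm hcf hp) hVU hVdown hne
  rw [← galleryTerm_eq p o]
  exact ⟨nonempty_galleryStage_of_lt ho, mem_image_of_mem _ ho, (setOf_galleryLT hcf hp ho).symm⟩

theorem through_gallery (hcf : IsCF f) (hp : IsSelector f p) :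
    f (univ \ upClo (gallery f p)) = ∅ :=
  galleryStage_galleryLength hcf hp

theorem subsetCompatible_gallery (hcf : IsCF f) (hp : IsSelector f p) :
    SubsetCompatible f (gallery f p) (galleryLT f p) := by
  rintro _ ⟨o, ho, rfl⟩
  rw [setOf_forall_not_le, setOf_galleryLT hcf hp ho]
  exact galleryTerm_mem hp (nonempty_galleryStage_of_lt ho)

theorem subset_galleryStage (hX : IsLowerSet X) (h : ∀ o' < o, galleryTerm p o' ∉ X) :
    X ⊆ galleryStage p o :=
  fun _ hz => ⟨trivial, fun ⟨_, ⟨o', ho', rfl⟩, hle⟩ => h o' ho' (hX hle hz)⟩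

theorem exists_first_galleryTerm_mem (hcf : IsCF f) (hp : IsSelector f p) (ho : Outcast f)
    (hX : IsLowerSet X) (hfX : (f X).Nonempty) :
    ∃ o < galleryLength f p, galleryTerm p o ∈ X ∧ ∀ o' < o, galleryTerm p o' ∉ X := by
  set κ := galleryLength f p
  obtain ⟨o, hoS, hmin⟩ :=
    wellFounded_lt.has_min {o | κ ≤ o ∨ galleryTerm p o ∈ X} ⟨κ, Or.inl le_rfl⟩
  have hbefore : ∀ o' < o, galleryTerm p o' ∉ X := fun o' h hmem => hmin o' (Or.inr hmem) h
  have hoκ : o < κ := by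
    by_contra! hκo
    have hXκ : X ⊆ galleryStage p κ :=
      subset_galleryStage hX fun o' h => hbefore o' (h.trans_le hκo)
    have hempty := galleryStage_galleryLength hcf hp
    have hfXκ : f X = f (galleryStage p κ) :=
      ho X _ hX (isLowerSet_univ_diff_upClo _) (hempty ▸ empty_subset X) hXκ
    exact hfX.ne_empty (hfXκ.trans hempty)
  exact ⟨o, hoκ, hoS.resolve_left hoκ.not_ge, hbefore⟩

end Gallery

section TargetSelector

variable {P : Type*} [PartialOrder P] {f : Set P → Set P} {X F : Set P} {x : P}

open Classical in
noncomputable def targetSelector (f : Set P → Set P) (X : Set P) (x : P) (F : Set P) : P :=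
  if x ∈ f (univ \ F) then x
  else if h : (f (univ \ F) \ X).Nonempty then h.some
  else if h : (f (univ \ F)).Nonempty then h.some else x

theorem isSelector_targetSelector : IsSelector f (targetSelector f X x) := by
  intro F _ hne
  unfold targetSelector
  split_ifs with h₁ h₂
  exacts [h₁, h₂.some_mem.1, hne.some_mem]

theorem targetSelector_eq_or_notMem (ho : Outcast f) (hX : IsLowerSet X) (hx : x ∈ f X)
    (hF : IsLowerSet (univ \ F)) (hXF : X ⊆ univ \ F) :
    targetSelector f X x F = x ∨ targetSelector f X x F ∉ X := by
  by_cases h₁ : x ∈ f (univ \ F)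
  · simp [targetSelector, h₁]
  have h₂ : (f (univ \ F) \ X).Nonempty := by
    rw [nonempty_iff_ne_empty, Ne, sdiff_eq_empty]
    exact fun hsub => h₁ (ho X _ hX hF hsub hXF ▸ hx)
  rw [targetSelector, if_neg h₁, dif_pos h₂]
  exact Or.inr h₂.some_mem.2

end TargetSelector

section ElementaryChoice

variable {P : Type*} [PartialOrder P] {f : Set P → Set P} {X : Set P} {x : P}

theorem mem_elemCFSub_gallery_targetSelector (hcf : IsCF f) (ho : Outcast f)
    (hX : IsLowerSet X) (hx : x ∈ f X) :
    x ∈ elemCFSub (gallery f (targetSelector f X x)) (galleryLT f (targetSelector f X x)) X := by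
  set p := targetSelector f X x
  have hp : IsSelector f p := isSelector_targetSelector
  obtain ⟨o, hoκ, hoX, hbefore⟩ := exists_first_galleryTerm_mem hcf hp ho hX ⟨x, hx⟩
  have hox : galleryTerm p o = x := by
    rw [galleryTerm_eq] at hoX ⊢
    exact (targetSelector_eq_or_notMem ho hX hx (isLowerSet_univ_diff_upClo _)
      (subset_galleryStage hX hbefore)).resolve_right (not_not.2 hoX)
  refine ⟨(hcf X hX).1 hx, x, ⟨o, hoκ, hox⟩, ?_, le_rfl⟩
  rintro _ ⟨o', ho', rfl⟩ hlt
  rw [← hox, galleryLT, imageLT_apply_iff (injOn_galleryTerm hcf hp) ho' hoκ] at hlt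
  exact hbefore o' hlt

theorem mem_of_mem_elemCFSub (hcf : IsCF f) (hh : Heredity f) (hX : IsLowerSet X)
    {U : Set P} {lt : P → P → Prop} (hcomp : SubsetCompatible f U lt)
    (hmem : x ∈ elemCFSub U lt X) : x ∈ f X := by
  obtain ⟨hxX, u, huU, hprev, hxu⟩ := hmem
  set Y := {z | ∀ v ∈ U, lt v u → ¬ v ≤ z}
  have hY : IsLowerSet Y := fun a b hba ha v hv hl hle => ha v hv hl (hle.trans hba)
  have hu : u ∈ f Y := hcomp u huU
  have huY : u ∈ Y := (hcf Y hY).1 hu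
  have hA : IsLowerSet (X ∪ Iic u) := hX.union (isLowerSet_Iic u)
  have hAY : X ∪ Iic u ⊆ Y := by
    rintro z (hz | hz) v hv hl hle
    · exact hprev v hv hl (hX hle hz)
    · exact huY v hv hl (hle.trans hz)
  -- heredity moves `u` down to `f (X ∪ Iic u)`, an ideal, which therefore contains `x ≤ u`
  have huA : u ∈ f (X ∪ Iic u) := hh _ _ hA hY hAY ⟨hu, Or.inr (mem_Iic.2 le_rfl)⟩
  have hxA : x ∈ f (X ∪ Iic u) := (hcf _ hA).2 hxu huA
  exact hh X _ hX hA subset_union_left ⟨hxA, hxX⟩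

end ElementaryChoice

/-- Main theorem (general case): for `x ∈ f X` there is a through gallery `U`
(a well-ordered sequence compatible with `f`) with `x ∈ f_U X`; consequently,
every conservative choice function is the union of the elementary choice functions
of well-ordered sequences compatible with it. -/
theorem conservative_through_gallery {P : Type*} [PartialOrder P] (f : Set P → Set P)
    (hcf : IsCF f) (hh : Heredity f) (ho : Outcast f)
    (X : Set P) (hX : IsLowerSet X) :
    (∀ x ∈ f X,
      ∃ p : Set P → P,
        (∀ F : Set P, IsUpperSet F → (f (Set.univ \ F)).Nonempty →
          p F ∈ f (Set.univ \ F)) ∧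
        ∃ (U : Set P) (lt : P → P → Prop),
          GalleryOn f p U lt ∧ f (Set.univ \ upClo U) = ∅ ∧
          IsWellOrderOn U lt ∧ SubsetCompatible f U lt ∧ x ∈ elemCFSub U lt X) ∧
    f X = {x | ∃ (U : Set P) (lt : P → P → Prop),
      IsWellOrderOn U lt ∧ SubsetCompatible f U lt ∧ x ∈ elemCFSub U lt X} := by
  refine ⟨fun x hx => ?_, Set.Subset.antisymm (fun x hx => ?_) ?_⟩
  · have hp : IsSelector f (targetSelector f X x) := isSelector_targetSelector
    exact ⟨_, hp, _, _, galleryOn_gallery hcf hp, through_gallery hcf hp,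
      isWellOrderOn_gallery hcf hp, subsetCompatible_gallery hcf hp,
      mem_elemCFSub_gallery_targetSelector hcf ho hX hx⟩
  · have hp : IsSelector f (targetSelector f X x) := isSelector_targetSelector
    exact ⟨_, _, isWellOrderOn_gallery hcf hp, subsetCompatible_gallery hcf hp,
      mem_elemCFSub_gallery_targetSelector hcf ho hX hx⟩
  · rintro x ⟨U, lt, -, hcomp, hmem⟩
    exact mem_of_mem_elemCFSub hcf hh hX hcomp hmem
end
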